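/- arXiv:1905.05957 — 3 statements merged into one kernel-verified Lean document; each statement's English description precedes it below -/
import Mathlib

section
/- Suppose a sequence δ_t in R^d satisfies δ_0 = 0 and E‖δ_t‖² ≤ α² E‖g_t - δ_{t-1}‖² for all t ≥ 1, where α ∈ [0,1) and E‖g_t‖² ≤ G² for all t. Then for any ρ > 0 with (1+1/ρ)α² < 1 and (1+ρ)α² < 1, E‖δ_t‖² ≤ G² / (1 - (1+ρ)α²) for all t. -/
open MeasureTheory

/-
Young's inequality gives `‖g - δ‖² ≤ (1 + 1/ρ)‖g‖² + (1 + ρ)‖δ‖²`, so the second moments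
`e t = E‖δ_t‖²` satisfy `e (t+1) ≤ (1 + ρ)α² e t + (1 + 1/ρ)α² G²`. This is a contraction with
ratio `q = (1 + ρ)α² < 1`, and since `(1 + 1/ρ)α² G² ≤ G² = (1 - q) · G²/(1 - q)`, the value
`G²/(1 - q)` is an upper bound that the recursion preserves; it holds at `t = 0` as `δ_0 = 0`.
-/

theorem add_sq_le_one_add_inv_mul_add_one_add_mul {ρ : ℝ} (hρ : 0 < ρ) (x y : ℝ) :
    (x + y) ^ 2 ≤ (1 + 1 / ρ) * x ^ 2 + (1 + ρ) * y ^ 2 := by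
  have hgap : (1 + 1 / ρ) * x ^ 2 + (1 + ρ) * y ^ 2 - (x + y) ^ 2 = (x - ρ * y) ^ 2 / ρ := by
    field_simp
    ring
  have : 0 ≤ (x - ρ * y) ^ 2 / ρ := by positivity
  linarith

theorem norm_sub_sq_le_one_add_inv_mul_add_one_add_mul {E : Type*} [SeminormedAddCommGroup E]
    {ρ : ℝ} (hρ : 0 < ρ) (a b : E) :
    ‖a - b‖ ^ 2 ≤ (1 + 1 / ρ) * ‖a‖ ^ 2 + (1 + ρ) * ‖b‖ ^ 2 :=
  (pow_le_pow_left₀ (norm_nonneg _) (norm_sub_le a b) 2).trans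
    (add_sq_le_one_add_inv_mul_add_one_add_mul hρ _ _)

/-- No integrability of `‖f - h‖²` is required: if it fails, the left-hand side is `0`. -/
theorem integral_norm_sub_sq_le_one_add_inv_mul_add_one_add_mul {Ω E : Type*}
    {m : MeasurableSpace Ω} {μ : Measure Ω} [SeminormedAddCommGroup E] {ρ : ℝ} (hρ : 0 < ρ)
    {f h : Ω → E} (hf : Integrable (fun ω => ‖f ω‖ ^ 2) μ)
    (hh : Integrable (fun ω => ‖h ω‖ ^ 2) μ) :
    ∫ ω, ‖f ω - h ω‖ ^ 2 ∂μ ≤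
      (1 + 1 / ρ) * ∫ ω, ‖f ω‖ ^ 2 ∂μ + (1 + ρ) * ∫ ω, ‖h ω‖ ^ 2 ∂μ := by
  rw [← integral_const_mul, ← integral_const_mul,
    ← integral_add (hf.const_mul _) (hh.const_mul _)]
  exact integral_mono_of_nonneg (Filter.Eventually.of_forall fun _ => by positivity)
    ((hf.const_mul _).add (hh.const_mul _))
    (Filter.Eventually.of_forall fun ω => norm_sub_sq_le_one_add_inv_mul_add_one_add_mul hρ _ _)

theorem forall_le_of_succ_le_mul_add {e : ℕ → ℝ} {q c B : ℝ} (hq : 0 ≤ q) (hc : c ≤ (1 - q) * B)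
    (h0 : e 0 ≤ B) (hsucc : ∀ n, e (n + 1) ≤ q * e n + c) : ∀ n, e n ≤ B
  | 0 => h0
  | n + 1 => by
    have := mul_le_mul_of_nonneg_left (forall_le_of_succ_le_mul_add hq hc h0 hsucc n) hq
    linarith [hsucc n]

theorem error_accumulation_bounded_general {d : ℕ} {Ω : Type*} {m0 : MeasurableSpace Ω}
    (μ : Measure Ω)
    (α ρ G : ℝ) (hρ : 0 < ρ)
    (h1 : (1 + 1 / ρ) * α ^ 2 < 1) (h2 : (1 + ρ) * α ^ 2 < 1)
    (δ g : ℕ → Ω → EuclideanSpace ℝ (Fin d))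
    (hδint : ∀ t, Integrable (fun ω => ‖δ t ω‖ ^ 2) μ)
    (hgint : ∀ t, Integrable (fun ω => ‖g t ω‖ ^ 2) μ)
    (hδ0 : δ 0 = fun _ => 0)
    (hrec : ∀ t : ℕ, 1 ≤ t →
      ∫ ω, ‖δ t ω‖ ^ 2 ∂μ ≤ α ^ 2 * ∫ ω, ‖g t ω - δ (t - 1) ω‖ ^ 2 ∂μ)
    (hG : ∀ t, ∫ ω, ‖g t ω‖ ^ 2 ∂μ ≤ G ^ 2) :
    ∀ t, ∫ ω, ‖δ t ω‖ ^ 2 ∂μ ≤ G ^ 2 / (1 - (1 + ρ) * α ^ 2) := by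
  have hgap : 0 < 1 - (1 + ρ) * α ^ 2 := by linarith
  refine forall_le_of_succ_le_mul_add (q := (1 + ρ) * α ^ 2) (c := α ^ 2 * ((1 + 1 / ρ) * G ^ 2))
    (by positivity) ?_ ?_ fun n => ?_
  · rw [mul_div_cancel₀ _ hgap.ne']
    nlinarith [sq_nonneg G]
  · simpa [hδ0] using by positivity
  · calc ∫ ω, ‖δ (n + 1) ω‖ ^ 2 ∂μ ≤ α ^ 2 * ∫ ω, ‖g (n + 1) ω - δ n ω‖ ^ 2 ∂μ :=
          hrec (n + 1) (Nat.le_add_left 1 n)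
      _ ≤ α ^ 2 * ((1 + 1 / ρ) * G ^ 2 + (1 + ρ) * ∫ ω, ‖δ n ω‖ ^ 2 ∂μ) := by
          gcongr
          refine (integral_norm_sub_sq_le_one_add_inv_mul_add_one_add_mul hρ
            (hgint (n + 1)) (hδint n)).trans ?_
          gcongr
          exact hG _
      _ = (1 + ρ) * α ^ 2 * ∫ ω, ‖δ n ω‖ ^ 2 ∂μ + α ^ 2 * ((1 + 1 / ρ) * G ^ 2) := by ring

/-- boundedness of the accumulated compression error of a contraction
compressor, via Young's inequality and unrolling the geometric recursion. -/
theorem error_accumulation_bounded {d : ℕ} {Ω : Type*} {m0 : MeasurableSpace Ω}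
    (μ : Measure Ω) [IsProbabilityMeasure μ]
    (α ρ G : ℝ) (hα0 : 0 ≤ α) (hα1 : α < 1) (hρ : 0 < ρ)
    (h1 : (1 + 1 / ρ) * α ^ 2 < 1) (h2 : (1 + ρ) * α ^ 2 < 1)
    (δ g : ℕ → Ω → EuclideanSpace ℝ (Fin d))
    (hδmeas : ∀ t, AEStronglyMeasurable (δ t) μ)
    (hgmeas : ∀ t, AEStronglyMeasurable (g t) μ)
    (hδint : ∀ t, Integrable (fun ω => ‖δ t ω‖ ^ 2) μ)
    (hgint : ∀ t, Integrable (fun ω => ‖g t ω‖ ^ 2) μ)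
    (hδ0 : δ 0 = fun _ => 0)
    (hrec : ∀ t : ℕ, 1 ≤ t →
      ∫ ω, ‖δ t ω‖ ^ 2 ∂μ ≤ α ^ 2 * ∫ ω, ‖g t ω - δ (t - 1) ω‖ ^ 2 ∂μ)
    (hG : ∀ t, ∫ ω, ‖g t ω‖ ^ 2 ∂μ ≤ G ^ 2) :
    ∀ t, ∫ ω, ‖δ t ω‖ ^ 2 ∂μ ≤ G ^ 2 / (1 - (1 + ρ) * α ^ 2) :=
  error_accumulation_bounded_general (m0 := m0) μ α ρ G hρ h1 h2 δ g hδint hgint hδ0 hrec hG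
end

section
/- Let f: R^d → R have L-Lipschitz gradient. Suppose y_{t+1} = y_t - γ∇f(x_t) + γξ_t with E[ξ_t | x_t, y_t] = 0, E‖ξ_t‖² ≤ σ²/n, and E‖∇f(y_t) - ∇f(x_t)‖² ≤ 2L²γ²ε². Then E f(y_{t+1}) - E f(y_t) ≤ (-γ/2 + Lγ²/2) E‖∇f(x_t)‖² + Lγ²σ²/(2n) + 4L²ε²γ³. -/
open MeasureTheory

open MeasureTheory InnerProductSpace

local notation "⟪" x ", " y "⟫" => @inner ℝ _ _ x y

lemma path_hasDerivAt {d : ℕ} (f : EuclideanSpace ℝ (Fin d) → ℝ)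
    (hdiff : ∀ z, DifferentiableAt ℝ f z) (a v : EuclideanSpace ℝ (Fin d)) (t : ℝ) :
    HasDerivAt (fun s : ℝ => f (a + s • v)) ⟪gradient f (a + t • v), v⟫ t := by
  have hp : HasDerivAt (fun s : ℝ => a + s • v) v t := by
    simpa using ((hasDerivAt_id t).smul_const v).const_add a
  have hF : HasFDerivAt f (toDual ℝ _ (gradient f (a + t • v))) (a + t • v) :=
    hasGradientAt_iff_hasFDerivAt.mp (hdiff _).hasGradientAt
  exact hF.comp_hasDerivAt t hp

lemma smooth_descent {d : ℕ} (f : EuclideanSpace ℝ (Fin d) → ℝ) (L : ℝ) (hL : 0 ≤ L)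
    (hdiff : ∀ z, DifferentiableAt ℝ f z)
    (hlip : ∀ a b : EuclideanSpace ℝ (Fin d), ‖gradient f a - gradient f b‖ ≤ L * ‖a - b‖)
    (a b : EuclideanSpace ℝ (Fin d)) :
    f b ≤ f a + ⟪gradient f a, b - a⟫ + L / 2 * ‖b - a‖ ^ 2 := by
  set v := b - a with hv
  have hgradcont : Continuous (gradient f) := by
    have : LipschitzWith ⟨L, hL⟩ (gradient f) := by
      apply LipschitzWith.of_dist_le_mul
      intro p q
      exact (by simpa [dist_eq_norm] using hlip p q : dist (gradient f p) (gradient f q) ≤ L * dist p q)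
    exact this.continuous
  have hg' : ∀ t : ℝ, HasDerivAt (fun s : ℝ => f (a + s • v)) ⟪gradient f (a + t • v), v⟫ t :=
    path_hasDerivAt f hdiff a v
  have hcont : Continuous fun t : ℝ => ⟪gradient f (a + t • v), v⟫ := by
    exact (hgradcont.comp (by continuity)).inner continuous_const
  have hFTC : f b - f a = ∫ t in (0:ℝ)..1, ⟪gradient f (a + t • v), v⟫ := by
    have := intervalIntegral.integral_eq_sub_of_hasDerivAt
      (fun t _ => hg' t) (hcont.intervalIntegrable 0 1)
    simpa [hv] using this.symm
  have hbound : ∀ t ∈ Set.Icc (0:ℝ) 1,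
      ⟪gradient f (a + t • v), v⟫ ≤ ⟪gradient f a, v⟫ + L * t * ‖v‖ ^ 2 := by
    intro t ht
    have h1 : ⟪gradient f (a + t • v), v⟫ - ⟪gradient f a, v⟫
        = ⟪gradient f (a + t • v) - gradient f a, v⟫ := by
      rw [inner_sub_left]
    have h2 : ⟪gradient f (a + t • v) - gradient f a, v⟫ ≤ L * t * ‖v‖ ^ 2 := by
      calc ⟪gradient f (a + t • v) - gradient f a, v⟫
          ≤ ‖gradient f (a + t • v) - gradient f a‖ * ‖v‖ := real_inner_le_norm _ _
        _ ≤ (L * ‖a + t • v - a‖) * ‖v‖ := by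
            gcongr; exact hlip _ _
        _ = L * t * ‖v‖ ^ 2 := by
            have : ‖a + t • v - a‖ = t * ‖v‖ := by
              simp [norm_smul, abs_of_nonneg ht.1]
            rw [this]; ring
    linarith
  have hInt : (∫ t in (0:ℝ)..1, ⟪gradient f (a + t • v), v⟫)
      ≤ ∫ t in (0:ℝ)..1, (⟪gradient f a, v⟫ + L * t * ‖v‖ ^ 2) := by
    apply intervalIntegral.integral_mono_on (by norm_num)
      (hcont.intervalIntegrable 0 1) ((by fun_prop : Continuous fun t : ℝ =>
        ⟪gradient f a, v⟫ + L * t * ‖v‖ ^ 2).intervalIntegrable 0 1)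
    exact hbound
  have hval : (∫ t in (0:ℝ)..1, (⟪gradient f a, v⟫ + L * t * ‖v‖ ^ 2))
      = ⟪gradient f a, v⟫ + L / 2 * ‖v‖ ^ 2 := by
    rw [intervalIntegral.integral_add (intervalIntegrable_const)
      ((by fun_prop : Continuous fun t : ℝ => L * t * ‖v‖ ^ 2).intervalIntegrable 0 1)]
    have h1 : (∫ t in (0:ℝ)..1, L * t * ‖v‖ ^ 2) = (L * ‖v‖ ^ 2) * ∫ t in (0:ℝ)..1, t := by
      rw [← intervalIntegral.integral_const_mul]; congr 1; ext t; ring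
    rw [h1, integral_id, intervalIntegral.integral_const]
    norm_num
    ring
  linarith [hFTC, hInt, hval.le]


set_option maxHeartbeats 1000000 in
/-- single-step descent lemma for error-compensated SGD along the
auxiliary sequence. Conditioning on the history, `x_t` and `y_t` are fixed vectors and
the noise `ξ_t` has (conditional) mean zero. -/
theorem single_step_descent {d : ℕ} {Ωs : Type*} {m0 : MeasurableSpace Ωs}
    (μ : Measure Ωs) [IsProbabilityMeasure μ]
    (f : EuclideanSpace ℝ (Fin d) → ℝ) (L γ σ ε : ℝ) (n : ℕ)
    (hn : 0 < n) (hL : 0 < L) (hγ : 0 < γ)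
    (hdiff : ∀ z, DifferentiableAt ℝ f z)
    (hlip : ∀ a b : EuclideanSpace ℝ (Fin d), ‖gradient f a - gradient f b‖ ≤ L * ‖a - b‖)
    (x y : EuclideanSpace ℝ (Fin d))
    (ξ : Ωs → EuclideanSpace ℝ (Fin d))
    (hξint : Integrable ξ μ)
    (hξsqint : Integrable (fun ω => ‖ξ ω‖ ^ 2) μ)
    (hmean : ∫ ω, ξ ω ∂μ = 0)
    (hvar : ∫ ω, ‖ξ ω‖ ^ 2 ∂μ ≤ σ ^ 2 / n)
    (hgap : ‖gradient f y - gradient f x‖ ^ 2 ≤ 2 * L ^ 2 * γ ^ 2 * ε ^ 2)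
    (y' : Ωs → EuclideanSpace ℝ (Fin d))
    (hy' : ∀ ω, y' ω = y - γ • gradient f x + γ • ξ ω)
    (hfy'int : Integrable (fun ω => f (y' ω)) μ) :
    (∫ ω, f (y' ω) ∂μ) - f y ≤
      (-(γ / 2) + L * γ ^ 2 / 2) * ‖gradient f x‖ ^ 2
        + L * γ ^ 2 * σ ^ 2 / (2 * n) + 4 * L ^ 2 * ε ^ 2 * γ ^ 3 := by
  set gx := gradient f x with hgx
  set gy := gradient f y with hgy
  set w : EuclideanSpace ℝ (Fin d) := γ • gy - (L * γ ^ 2) • gx with hw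
  set C0 : ℝ := f y - γ * ⟪gy, gx⟫ + L * γ ^ 2 / 2 * ‖gx‖ ^ 2 with hC0
  -- pointwise descent bound
  have hpt : ∀ ω, f (y' ω) ≤
      C0 + ⟪w, ξ ω⟫ + L * γ ^ 2 / 2 * ‖ξ ω‖ ^ 2 := by
    intro ω
    have hd := smooth_descent f L hL.le hdiff hlip y (y' ω)
    have hdiffv : y' ω - y = γ • (ξ ω - gx) := by
      rw [hy' ω]; rw [smul_sub]; abel
    rw [hdiffv] at hd
    have h1 : ⟪gy, γ • (ξ ω - gx)⟫ = γ * ⟪gy, ξ ω⟫ - γ * ⟪gy, gx⟫ := by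
      rw [real_inner_smul_right, inner_sub_right]; ring
    have h2 : ‖γ • (ξ ω - gx)‖ ^ 2
        = γ ^ 2 * (‖ξ ω‖ ^ 2 - 2 * ⟪gx, ξ ω⟫ + ‖gx‖ ^ 2) := by
      have ha : ‖γ • (ξ ω - gx)‖ ^ 2 = γ ^ 2 * ‖ξ ω - gx‖ ^ 2 := by
        rw [norm_smul, mul_pow, Real.norm_eq_abs, sq_abs]
      have hb : ‖ξ ω - gx‖ ^ 2 = ‖ξ ω‖ ^ 2 - 2 * ⟪gx, ξ ω⟫ + ‖gx‖ ^ 2 := by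
        rw [norm_sub_sq_real, real_inner_comm]
      rw [ha, hb]
    have h3 : ⟪w, ξ ω⟫ = γ * ⟪gy, ξ ω⟫ - (L * γ ^ 2) * ⟪gx, ξ ω⟫ := by
      rw [hw, inner_sub_left, real_inner_smul_left, real_inner_smul_left]
    rw [h1, h2] at hd
    rw [h3, hC0]
    linarith
  -- integrate
  have hwint : Integrable (fun ω => ⟪w, ξ ω⟫) μ :=
    (innerSL ℝ w).integrable_comp hξint
  have hwzero : (∫ ω, ⟪w, ξ ω⟫ ∂μ) = 0 := by
    have := (innerSL ℝ w).integral_comp_comm hξint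
    simp only [innerSL_apply_apply] at this
    rw [this, hmean]
    simp
  have hIle : (∫ ω, f (y' ω) ∂μ) ≤
      C0
        + (∫ ω, ⟪w, ξ ω⟫ ∂μ) + L * γ ^ 2 / 2 * (∫ ω, ‖ξ ω‖ ^ 2 ∂μ) := by
    have hA : Integrable (fun ω => C0 + ⟪w, ξ ω⟫) μ := (integrable_const C0).add hwint
    have hrhsint : Integrable (fun ω =>
        C0 + ⟪w, ξ ω⟫ + L * γ ^ 2 / 2 * ‖ξ ω‖ ^ 2) μ :=
      hA.add (hξsqint.const_mul _)
    have := integral_mono hfy'int hrhsint hpt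
    calc (∫ ω, f (y' ω) ∂μ) ≤ _ := this
      _ = _ := by
          rw [integral_add hA (hξsqint.const_mul _),
            integral_add (integrable_const C0) hwint, integral_const,
            integral_const_mul]
          simp
  rw [hwzero] at hIle
  -- variance bound
  have hξsqnn : (0:ℝ) ≤ ∫ ω, ‖ξ ω‖ ^ 2 ∂μ :=
    integral_nonneg fun ω => sq_nonneg _
  have hvar' : L * γ ^ 2 / 2 * (∫ ω, ‖ξ ω‖ ^ 2 ∂μ) ≤ L * γ ^ 2 * σ ^ 2 / (2 * n) := by
    have hnpos : (0:ℝ) < n := Nat.cast_pos.mpr hn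
    have : L * γ ^ 2 / 2 * (∫ ω, ‖ξ ω‖ ^ 2 ∂μ) ≤ L * γ ^ 2 / 2 * (σ ^ 2 / n) := by
      gcongr
    calc _ ≤ L * γ ^ 2 / 2 * (σ ^ 2 / n) := this
      _ = L * γ ^ 2 * σ ^ 2 / (2 * n) := by ring
  -- inner product bound
  have hsplit : ⟪gy, gx⟫ = ‖gx‖ ^ 2 + ⟪gy - gx, gx⟫ := by
    rw [inner_sub_left, real_inner_self_eq_norm_sq]; ring
  have hyoung : -⟪gy - gx, gx⟫ ≤ ‖gy - gx‖ ^ 2 + ‖gx‖ ^ 2 / 4 := by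
    have h1 : -⟪gy - gx, gx⟫ ≤ ‖gy - gx‖ * ‖gx‖ := by
      have := real_inner_le_norm (gy - gx) (-gx)
      simpa [norm_neg, inner_neg_right] using this
    nlinarith [sq_nonneg (‖gy - gx‖ - ‖gx‖ / 2)]
  have hgapnn : (0:ℝ) ≤ ‖gy - gx‖ ^ 2 := sq_nonneg _
  nlinarith [sq_nonneg ‖gx‖, mul_pos hγ (mul_pos hγ hγ), sq_nonneg (L * ε * γ),
    mul_le_mul_of_nonneg_left hgap hγ.le,
    mul_le_mul_of_nonneg_left hyoung hγ.le]
end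

section
/- Under the assumptions of the DoubleSqueeze convergence theorem, choosing γ = 1/(4L + σ√(T/n) + ε^{2/3} T^{1/3}) yields (1/T) Σ_{t=0}^{T-1} E‖∇f(x_t)‖² ≤ C₁ σ/√(nT) + C₂ ε^{2/3}/T^{2/3} + C₃/T, where C₁, C₂, C₃ depend only on L and f(x₀) - f*. -/
set_option maxHeartbeats 1000000

open Finset

/-- corollary of the DoubleSqueeze convergence theorem with the step size
`γ = 1/(4L + σ√(T/n) + ε^{2/3} T^{1/3})`. Here `Eg t` stands for `E‖∇f(x_t)‖²` and
`F0 = f(x₀) - f*`; the constants `C₁, C₂, C₃` depend only on `L` and `F0`. -/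
theorem doubleSqueeze_corollary (L F0 : ℝ) (hL : 0 < L) (hF0 : 0 ≤ F0) :
    ∃ C₁ C₂ C₃ : ℝ,
      ∀ (σ ε : ℝ) (T n : ℕ) (γ : ℝ) (Eg : ℕ → ℝ),
        0 < σ → 0 < ε → 0 < T → 0 < n →
        (∀ t, 0 ≤ Eg t) →
        γ = 1 / (4 * L + σ * Real.sqrt ((T : ℝ) / n)
              + ε ^ ((2 : ℝ) / 3) * (T : ℝ) ^ ((1 : ℝ) / 3)) →
        (γ / 2 - L * γ ^ 2 / 2) * ∑ t ∈ range T, Eg t ≤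
            F0 + L * γ ^ 2 * σ ^ 2 * T / (2 * n) + 4 * L ^ 2 * ε ^ 2 * γ ^ 3 * T →
        (1 / (T : ℝ)) * ∑ t ∈ range T, Eg t ≤
            C₁ * σ / Real.sqrt ((n : ℝ) * T)
              + C₂ * ε ^ ((2 : ℝ) / 3) / (T : ℝ) ^ ((2 : ℝ) / 3)
              + C₃ / T := by
  refine ⟨8/3 * (F0 + L/2), 8/3 * (F0 + 4*L^2), 32*L*F0/3, ?_⟩
  intro σ ε T n γ Eg hσ hε hT hn hEg hγ hbound
  have hTpos : (0:ℝ) < T := by exact_mod_cast hT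
  have hnpos : (0:ℝ) < n := by exact_mod_cast hn
  set a := σ * Real.sqrt ((T:ℝ)/n) with ha_def
  set b := ε ^ ((2:ℝ)/3) * (T:ℝ) ^ ((1:ℝ)/3) with hb_def
  set s := Real.sqrt ((n:ℝ)*T) with hs_def
  set u := (T:ℝ) ^ ((2:ℝ)/3) with hu_def
  set S := ∑ t ∈ range T, Eg t with hS_def
  have ha : 0 < a := mul_pos hσ (Real.sqrt_pos.2 (div_pos hTpos hnpos))
  have hb : 0 < b := mul_pos (Real.rpow_pos_of_pos hε _) (Real.rpow_pos_of_pos hTpos _)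
  have hspos : 0 < s := Real.sqrt_pos.2 (by positivity)
  have hupos : 0 < u := Real.rpow_pos_of_pos hTpos _
  have hD : 0 < 4*L + a + b := by linarith
  have hγpos : 0 < γ := by rw [hγ]; positivity
  have hγD : γ * (4*L + a + b) = 1 := by
    rw [hγ]; field_simp
  have hS : 0 ≤ S := Finset.sum_nonneg fun t _ => hEg t
  have hexp : 4*(L*γ) + γ*a + γ*b = 1 := by linear_combination hγD
  have hγa' : 0 < γ*a := mul_pos hγpos ha
  have hγb' : 0 < γ*b := mul_pos hγpos hb
  have hLγ' : 0 < L*γ := mul_pos hL hγpos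
  have hLγ : L * γ ≤ 1/4 := by linarith
  have hcoef : (3/8)*γ ≤ γ/2 - L*γ^2/2 := by
    have h1 : L*γ^2 ≤ (1/4)*γ := by
      calc L*γ^2 = (L*γ)*γ := by ring
      _ ≤ (1/4)*γ := mul_le_mul_of_nonneg_right hLγ hγpos.le
    linarith
  have key : (3/8)*γ*S ≤ F0 + L*γ^2*σ^2*T/(2*n) + 4*L^2*ε^2*γ^3*T := by
    refine le_trans ?_ hbound
    exact mul_le_mul_of_nonneg_right hcoef hS
  -- divide by (3/8)γ
  have heq : F0 + L*γ^2*σ^2*T/(2*n) + 4*L^2*ε^2*γ^3*T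
      = (3/8)*γ*((8/3)*(F0*(4*L+a+b) + L*γ*σ^2*(T:ℝ)/(2*n) + 4*L^2*ε^2*γ^2*T)) := by
    linear_combination (-F0) * hγD
  have hS_le : S ≤ (8/3)*(F0*(4*L+a+b) + L*γ*σ^2*(T:ℝ)/(2*n) + 4*L^2*ε^2*γ^2*T) := by
    have h := key.trans_eq heq
    exact le_of_mul_le_mul_left h (by positivity)
  -- identities
  have hs2 : s^2 = (n:ℝ)*T := Real.sq_sqrt (by positivity)
  have has : a * s = σ * T := by
    have h1 : Real.sqrt ((T:ℝ)/n) * s = T := by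
      rw [hs_def, ← Real.sqrt_mul (by positivity) ((n:ℝ)*T),
        show (T:ℝ)/n*((n:ℝ)*T) = (T:ℝ)^2 by field_simp]
      exact Real.sqrt_sq hTpos.le
    calc a * s = σ * (Real.sqrt ((T:ℝ)/n) * s) := by rw [ha_def]; ring
    _ = σ * T := by rw [h1]
  have han : a * n = σ * s := by
    have hfac : (a*n - σ*s)*s = 0 := by linear_combination (n:ℝ) * has - σ * hs2
    rcases mul_eq_zero.1 hfac with h | h
    · linarith
    · exact absurd h hspos.ne'
  have hTu : (T:ℝ)^((1:ℝ)/3) * u = T := by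
    rw [hu_def, ← Real.rpow_add hTpos]
    norm_num
  have hbu : b * u = ε ^ ((2:ℝ)/3) * T := by
    calc b * u = ε ^ ((2:ℝ)/3) * ((T:ℝ)^((1:ℝ)/3) * u) := by rw [hb_def]; ring
    _ = _ := by rw [hTu]
  have hb2 : b^2 = ε ^ ((4:ℝ)/3) * u := by
    rw [hb_def, hu_def, mul_pow, ← Real.rpow_natCast (ε ^ ((2:ℝ)/3)) 2,
      ← Real.rpow_mul hε.le, ← Real.rpow_natCast ((T:ℝ) ^ ((1:ℝ)/3)) 2,
      ← Real.rpow_mul hTpos.le]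
    norm_num
  have hεε : ε ^ ((2:ℝ)/3) * ε ^ ((4:ℝ)/3) = ε^2 := by
    rw [← Real.rpow_natCast ε 2, ← Real.rpow_add hε]
    norm_num
  -- term identities / bounds
  have haT : a / T = σ / s := by
    rw [div_eq_div_iff hTpos.ne' hspos.ne']; linear_combination has
  have hbT : b / T = ε ^ ((2:ℝ)/3) / u := by
    rw [div_eq_div_iff hTpos.ne' hupos.ne']; linear_combination hbu
  have hγa : γ * a ≤ 1 := by linarith
  have hγb : γ * b ≤ 1 := by linarith
  have h2 : L*γ*σ^2/(2*n) ≤ (L/2)*(σ/s) := by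
    have hγle : γ ≤ 1/a := (le_div_iff₀ ha).2 (by linarith)
    have step : L*γ*σ^2/(2*n) ≤ L*(1/a)*σ^2/(2*n) := by gcongr
    refine step.trans_eq ?_
    have hσs : σ^2/(a*(n:ℝ)) = σ/s := by
      rw [div_eq_div_iff (by positivity : (a*(n:ℝ)) ≠ 0) hspos.ne']
      linear_combination (-σ) * han
    calc L*(1/a)*σ^2/(2*(n:ℝ)) = L/2 * (σ^2/(a*(n:ℝ))) := by ring
    _ = L/2 * (σ/s) := by rw [hσs]
  have h3 : 4*L^2*ε^2*γ^2 ≤ 4*L^2*(ε ^ ((2:ℝ)/3)/u) := by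
    have hγle : γ ≤ 1/b := (le_div_iff₀ hb).2 (by linarith)
    have hγ2 : γ^2 ≤ 1/b^2 := by
      calc γ^2 ≤ (1/b)^2 := pow_le_pow_left₀ hγpos.le hγle 2
      _ = 1/b^2 := by rw [div_pow, one_pow]
    have step : 4*L^2*ε^2*γ^2 ≤ 4*L^2*ε^2*(1/b^2) :=
      mul_le_mul_of_nonneg_left hγ2 (by positivity)
    refine step.trans_eq ?_
    have : ε^2*(1/b^2) = ε ^ ((2:ℝ)/3)/u := by
      rw [hb2]
      field_simp
      linear_combination (-1) * hεε
    rw [mul_assoc, this]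
  -- combine
  have hmain : (1/(T:ℝ))*S ≤
      (8/3)*(F0*(4*L+a+b)/T + L*γ*σ^2/(2*n) + 4*L^2*ε^2*γ^2) := by
    have h := mul_le_mul_of_nonneg_right hS_le (le_of_lt (show (0:ℝ) < 1/T by positivity))
    calc (1/(T:ℝ))*S = S * (1/T) := by ring
    _ ≤ (8/3)*(F0*(4*L+a+b) + L*γ*σ^2*(T:ℝ)/(2*n) + 4*L^2*ε^2*γ^2*T) * (1/T) := h
    _ = (8/3)*(F0*(4*L+a+b)/T + L*γ*σ^2/(2*n) + 4*L^2*ε^2*γ^2) := by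
        field_simp
  have hB1 : F0*(4*L+a+b)/T = 4*L*F0/T + F0*(σ/s) + F0*(ε ^ ((2:ℝ)/3)/u) := by
    rw [← haT, ← hbT]; ring
  have hfinal : (8/3)*(F0*(4*L+a+b)/T + L*γ*σ^2/(2*n) + 4*L^2*ε^2*γ^2) ≤
      8/3 * (F0 + L/2) * σ / s + 8/3 * (F0 + 4*L^2) * ε ^ ((2:ℝ)/3) / u + 32*L*F0/3 / T := by
    have hgoal : 8/3 * (F0 + L/2) * σ / s + 8/3 * (F0 + 4*L^2) * ε ^ ((2:ℝ)/3) / u + 32*L*F0/3 / T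
        = (8/3)*((4*L*F0/T + F0*(σ/s) + F0*(ε ^ ((2:ℝ)/3)/u)) + (L/2)*(σ/s) + 4*L^2*(ε ^ ((2:ℝ)/3)/u)) := by
      ring
    rw [hgoal, hB1]
    linarith [h2, h3]
  exact hmain.trans hfinal
end
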